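/- arXiv:2112.06380 — 3 statements merged into one kernel-verified Lean document; each statement's English description precedes it below -/
import Mathlib

section
/- For any scaling parameter 0 ≤ φ ≤ 1 and any two permutations π* and σ* of [n], the total variation distance between the Mallows models M(φ, π*) and M(φ, σ*) satisfies D_TV(M(φ, π*), M(φ, σ*)) ≤ 2(1 − φ)·‖v_{π*} − v_{σ*}‖. -/
open scoped Classical
open Finset

namespace Mallows

/-- Kendall-tau distance between two permutations of `Fin n`: the number of pairs of
elements whose relative order differs in the two permutations. -/
noncomputable def dKT {n : ℕ} (π σ : Equiv.Perm (Fin n)) : ℕ :=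
  (Finset.univ.filter (fun p : Fin n × Fin n =>
    p.1 < p.2 ∧ ¬((π.symm p.1 < π.symm p.2) ↔ (σ.symm p.1 < σ.symm p.2)))).card

/-- Probability mass function of the Mallows model `M(φ, π₀)`. -/
noncomputable def mallowsPMF {n : ℕ} (φ : ℝ) (π₀ π : Equiv.Perm (Fin n)) : ℝ :=
  φ ^ dKT π π₀ / ∑ σ : Equiv.Perm (Fin n), φ ^ dKT σ π₀

/-- Expectation of `f` under `M(φ, π₀)`. -/
noncomputable def mExp {n : ℕ} (φ : ℝ) (π₀ : Equiv.Perm (Fin n))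
    (f : Equiv.Perm (Fin n) → ℝ) : ℝ :=
  ∑ π : Equiv.Perm (Fin n), mallowsPMF φ π₀ π * f π

/-- Probability of the event `A` under `M(φ, π₀)`. -/
noncomputable def mProb {n : ℕ} (φ : ℝ) (π₀ : Equiv.Perm (Fin n))
    (A : Equiv.Perm (Fin n) → Prop) : ℝ :=
  ∑ π : Equiv.Perm (Fin n), if A π then mallowsPMF φ π₀ π else 0

/-- Total variation distance between two pmfs on permutations of `Fin n`. -/
noncomputable def tvDist {n : ℕ} (p q : Equiv.Perm (Fin n) → ℝ) : ℝ :=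
  (∑ π : Equiv.Perm (Fin n), |p π - q π|) / 2

/-- Kullback–Leibler divergence between two pmfs on permutations of `Fin n`. -/
noncomputable def klDiv {n : ℕ} (p q : Equiv.Perm (Fin n) → ℝ) : ℝ :=
  ∑ π : Equiv.Perm (Fin n), p π * Real.log (p π / q π)

/-- Position vector of a permutation: entry `i` is the position `π⁻¹ i` of element `i`. -/
noncomputable def posVec {n : ℕ} (π : Equiv.Perm (Fin n)) : EuclideanSpace ℝ (Fin n) :=
  WithLp.toLp 2 (fun i => ((π.symm i).1 : ℝ))

/-- Front adjustment vector of `π` with respect to `π̂`: entry `i` counts the elements `j`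
with `π̂⁻¹ j < π̂⁻¹ i` and `π⁻¹ j > π⁻¹ i`. -/
noncomputable def leftAdj {n : ℕ} (πh π : Equiv.Perm (Fin n)) : EuclideanSpace ℝ (Fin n) :=
  WithLp.toLp 2 (fun i => ((Finset.univ.filter (fun j : Fin n =>
    πh.symm j < πh.symm i ∧ π.symm i < π.symm j)).card : ℝ))

/-- Back adjustment vector of `π` with respect to `π̂`: entry `i` counts the elements `j`
with `π̂⁻¹ j > π̂⁻¹ i` and `π⁻¹ j < π⁻¹ i`. -/
noncomputable def rightAdj {n : ℕ} (πh π : Equiv.Perm (Fin n)) : EuclideanSpace ℝ (Fin n) :=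
  WithLp.toLp 2 (fun i => ((Finset.univ.filter (fun j : Fin n =>
    πh.symm i < πh.symm j ∧ π.symm j < π.symm i)).card : ℝ))

/-!
For `φ ≥ 1/2` both laws are positive, and Cauchy–Schwarz with weights `p + q` followed by the
logarithmic-mean inequality bounds `(2 D_TV)²` by `2 ∑ (p - q) (log p - log q)`. For Mallows laws
the normalising constants cancel there, leaving `log (1/φ)` times the expectation of
`d(π, σ₀) - d(π, π₀)` under `M(φ, π₀)` plus that of the reverse difference under `M(φ, σ₀)`.
This difference is a signed count over the pairs `a, b` on which `π₀` and `σ₀` disagree. Exchanging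
`a` and `b` costs at most `2k - 1` inversions, `k` being their distance in `π₀`, so each such pair
contributes at most `2k (1 - φ)`; and these distances sum to `‖v_{π₀} - v_{σ₀}‖² / 2`, because
`v_{σ₀} = v_{π₀} - leftAdj + rightAdj` and `‖v_{π₀}‖ = ‖v_{σ₀}‖`. Finally `log (1/φ) ≤ 2 (1 - φ)`.
For `φ < 1/2` the bound exceeds `1`, since distinct rankings have `‖v_{π₀} - v_{σ₀}‖ ≥ 1`.
-/

open Equiv

section

variable {n : ℕ} {φ : ℝ}

def discordantPairs (π σ : Perm (Fin n)) : Finset (Fin n × Fin n) :=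
  univ.filter fun p => π.symm p.1 < π.symm p.2 ∧ σ.symm p.2 < σ.symm p.1

lemma mem_discordantPairs {π σ : Perm (Fin n)} {p : Fin n × Fin n} :
    p ∈ discordantPairs π σ ↔ π.symm p.1 < π.symm p.2 ∧ σ.symm p.2 < σ.symm p.1 := by
  simp [discordantPairs]

lemma dKT_eq_card_discordantPairs (π σ : Perm (Fin n)) :
    dKT π σ = #(discordantPairs π σ) := by
  refine card_nbij' (fun p => if π.symm p.1 < π.symm p.2 then p else p.swap)
    (fun p => if p.1 < p.2 then p else p.swap) ?_ ?_ ?_ ?_ <;>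
  · intro p hp
    simp only [coe_filter, mem_univ, true_and, Set.mem_ofPred_eq, discordantPairs] at hp ⊢
    split_ifs at * <;> grind [Equiv.apply_eq_iff_eq]

lemma dKT_self (π : Perm (Fin n)) : dKT π π = 0 := by
  simp [dKT]

lemma dKT_triangle (π σ ρ : Perm (Fin n)) : dKT π ρ ≤ dKT π σ + dKT σ ρ := by
  simp only [dKT_eq_card_discordantPairs]
  refine (card_le_card fun p hp => ?_).trans (card_union_le _ _)
  simp only [mem_union, mem_discordantPairs] at hp ⊢
  grind [Equiv.apply_eq_iff_eq]

lemma dKT_mul_left (τ π σ : Perm (Fin n)) : dKT (τ * π) (τ * σ) = dKT π σ := by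
  simp only [dKT_eq_card_discordantPairs]
  refine card_equiv (τ.symm.prodCongr τ.symm) fun p => ?_
  simp [mem_discordantPairs, Perm.mul_def]

lemma dKT_mul_left_le (τ π π₀ : Perm (Fin n)) :
    dKT (τ * π) π₀ ≤ dKT π π₀ + dKT π₀ (τ⁻¹ * π₀) := by
  calc dKT (τ * π) π₀ = dKT π (τ⁻¹ * π₀) := by
        rw [← dKT_mul_left τ⁻¹, inv_mul_cancel_left]
    _ ≤ dKT π π₀ + dKT π₀ (τ⁻¹ * π₀) := dKT_triangle _ _ _

lemma card_filter_lt_symm_lt (π : Perm (Fin n)) (i j : Fin n) :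
    #(univ.filter fun c => i < π.symm c ∧ π.symm c < j) = (j : ℕ) - i - 1 := by
  rw [← Fin.card_Ioo]
  exact card_equiv π.symm fun c => by simp

lemma dKT_swap_mul_self_lt {π₀ : Perm (Fin n)} {a b : Fin n} (hab : π₀.symm a < π₀.symm b) :
    dKT π₀ (swap a b * π₀) < 2 * ((π₀.symm b : ℕ) - π₀.symm a) := by
  set between := univ.filter fun c => π₀.symm a < π₀.symm c ∧ π₀.symm c < π₀.symm b
  have hsub : discordantPairs π₀ (swap a b * π₀) ⊆
      insert (a, b) (between.image (a, ·) ∪ between.image (·, b)) := by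
    -- only `(a, b)` and the pairs joining `a` or `b` to an element between them change order
    intro p hp
    simp only [mem_discordantPairs, Perm.mul_def, symm_trans_apply, symm_swap,
      swap_apply_def] at hp
    simp only [mem_insert, mem_union, mem_image, between, mem_filter, mem_univ, true_and]
    split_ifs at hp <;> grind [Equiv.apply_eq_iff_eq]
  rw [dKT_eq_card_discordantPairs]
  calc #(discordantPairs π₀ (swap a b * π₀))
      ≤ #(between.image (a, ·) ∪ between.image (·, b)) + 1 :=
        (card_le_card hsub).trans (card_insert_le _ _)
    _ ≤ #between + #between + 1 := by
        gcongr
        exact (card_union_le _ _).trans (add_le_add card_image_le card_image_le)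
    _ < 2 * ((π₀.symm b : ℕ) - π₀.symm a) := by
        have : (π₀.symm a : ℕ) < π₀.symm b := hab
        rw [card_filter_lt_symm_lt]
        omega

lemma dKT_sub_dKT_eq_sum (π π₀ σ₀ : Perm (Fin n)) :
    (dKT π σ₀ : ℝ) - dKT π π₀ = ∑ p ∈ discordantPairs π₀ σ₀,
      ((if π.symm p.1 < π.symm p.2 then 1 else 0) -
        (if π.symm p.2 < π.symm p.1 then 1 else 0)) := by
  have hswap : ∑ p : Fin n × Fin n, (if π₀.symm p.1 < π₀.symm p.2 ∧ σ₀.symm p.2 < σ₀.symm p.1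
        then (if π.symm p.2 < π.symm p.1 then (1 : ℝ) else 0) else 0) =
      ∑ p : Fin n × Fin n, (if π₀.symm p.2 < π₀.symm p.1 ∧ σ₀.symm p.1 < σ₀.symm p.2
        then (if π.symm p.1 < π.symm p.2 then 1 else 0) else 0) :=
    Fintype.sum_equiv (Equiv.prodComm _ _) _ _ fun _ => rfl
  simp only [dKT_eq_card_discordantPairs, discordantPairs, natCast_card_filter, sum_filter,
    sum_sub_distrib]
  rw [hswap, ← sum_sub_distrib, ← sum_sub_distrib]
  refine sum_congr rfl fun p _ => ?_
  split_ifs <;> grind [Equiv.apply_eq_iff_eq]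

lemma natCast_symm_eq_sum (π : Perm (Fin n)) (c : Fin n) :
    ((π.symm c : ℕ) : ℝ) = ∑ x, if π.symm x < π.symm c then 1 else 0 := by
  rw [← natCast_card_filter, ← Fin.card_Iio]
  exact congrArg _ (card_equiv π fun x => by simp)

lemma posVec_eq_sub_leftAdj_add_rightAdj (π σ : Perm (Fin n)) :
    posVec σ = posVec π - leftAdj π σ + rightAdj π σ := by
  ext c
  simp only [posVec, leftAdj, rightAdj, PiLp.add_apply, PiLp.sub_apply, natCast_card_filter,
    natCast_symm_eq_sum, ← sum_sub_distrib, ← sum_add_distrib]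
  refine sum_congr rfl fun x _ => ?_
  split_ifs <;> grind [Equiv.apply_eq_iff_eq]

lemma norm_posVec_eq (π σ : Perm (Fin n)) : ‖posVec π‖ = ‖posVec σ‖ := by
  simp only [EuclideanSpace.norm_eq, posVec]
  congr 1
  exact (Equiv.sum_comp π.symm (fun i => ‖((i : ℕ) : ℝ)‖ ^ 2)).trans
    (Equiv.sum_comp σ.symm _).symm

lemma sum_discordantPairs_sub_eq_norm_sq (π σ : Perm (Fin n)) :
    ∑ p ∈ discordantPairs π σ, (((π.symm p.2 : ℕ) : ℝ) - (π.symm p.1 : ℕ)) =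
      ‖posVec π - posVec σ‖ ^ 2 / 2 := by
  have hinner : ∑ p ∈ discordantPairs π σ, (((π.symm p.2 : ℕ) : ℝ) - (π.symm p.1 : ℕ)) =
      inner ℝ (posVec π) (leftAdj π σ - rightAdj π σ) := by
    simp only [PiLp.inner_apply, posVec, leftAdj, rightAdj, PiLp.sub_apply, natCast_card_filter,
      discordantPairs, sum_filter, Fintype.sum_prod_type, Real.inner_apply, mul_sub, mul_sum,
      mul_ite, mul_one, mul_zero, sum_sub_distrib]
    rw [sum_comm]
  have hsub : posVec π - posVec σ = leftAdj π σ - rightAdj π σ := by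
    rw [posVec_eq_sub_leftAdj_add_rightAdj π σ]; abel
  rw [hinner, ← hsub, inner_sub_right, real_inner_self_eq_norm_sq, norm_sub_sq_real,
    norm_posVec_eq σ π]
  ring

lemma sum_pow_dKT_pos (hφ : 0 ≤ φ) (π₀ : Perm (Fin n)) :
    0 < ∑ σ : Perm (Fin n), φ ^ dKT σ π₀ :=
  calc 0 < φ ^ dKT π₀ π₀ := by simp [dKT_self]
    _ ≤ _ := single_le_sum (fun σ _ => pow_nonneg hφ (dKT σ π₀)) (mem_univ π₀)

lemma mallowsPMF_nonneg (hφ : 0 ≤ φ) (π₀ π : Perm (Fin n)) : 0 ≤ mallowsPMF φ π₀ π :=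
  div_nonneg (pow_nonneg hφ _) (sum_pow_dKT_pos hφ π₀).le

lemma mallowsPMF_pos (hφ : 0 < φ) (π₀ π : Perm (Fin n)) : 0 < mallowsPMF φ π₀ π :=
  div_pos (pow_pos hφ _) (sum_pow_dKT_pos hφ.le π₀)

lemma sum_mallowsPMF (hφ : 0 ≤ φ) (π₀ : Perm (Fin n)) : ∑ π, mallowsPMF φ π₀ π = 1 := by
  simp only [mallowsPMF, ← sum_div]
  exact div_self (sum_pow_dKT_pos hφ π₀).ne'

lemma one_sub_pow_le {x : ℝ} (hx : -1 ≤ x) (m : ℕ) : 1 - x ^ m ≤ m * (1 - x) := by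
  have := one_add_mul_le_pow (show (-2 : ℝ) ≤ x - 1 by linarith) m
  rw [add_sub_cancel] at this
  linarith

lemma mallowsPMF_mul_pow_le (hφ0 : 0 ≤ φ) (hφ1 : φ ≤ 1) (τ π₀ π : Perm (Fin n)) :
    mallowsPMF φ π₀ π * φ ^ dKT π₀ (τ⁻¹ * π₀) ≤ mallowsPMF φ π₀ (τ * π) := by
  rw [mallowsPMF, mallowsPMF, div_mul_eq_mul_div, ← pow_add]
  exact div_le_div_of_nonneg_right (pow_le_pow_of_le_one hφ0 hφ1 (dKT_mul_left_le τ π π₀))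
    (sum_pow_dKT_pos hφ0 π₀).le

lemma mProb_lt_sub_mProb_gt_le (hφ0 : 0 ≤ φ) (hφ1 : φ ≤ 1) {π₀ : Perm (Fin n)} {a b : Fin n}
    (hab : π₀.symm a < π₀.symm b) :
    mProb φ π₀ (fun π => π.symm a < π.symm b) - mProb φ π₀ (fun π => π.symm b < π.symm a) ≤
      2 * (1 - φ) * (((π₀.symm b : ℕ) : ℝ) - (π₀.symm a : ℕ)) := by
  set m := dKT π₀ (swap a b * π₀)
  have hreindex : mProb φ π₀ (fun π => π.symm b < π.symm a) =
      ∑ π, if π.symm a < π.symm b then mallowsPMF φ π₀ (swap a b * π) else 0 :=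
    Fintype.sum_equiv (Equiv.mulLeft (swap a b)) _ _ fun π => by
      simp [Perm.mul_def, Equiv.trans_assoc]
  have hpoint (π : Perm (Fin n)) :
      mallowsPMF φ π₀ π - mallowsPMF φ π₀ (swap a b * π) ≤ mallowsPMF φ π₀ π * (m * (1 - φ)) := by
    have := mallowsPMF_mul_pow_le hφ0 hφ1 (swap a b) π₀ π
    rw [swap_inv] at this
    nlinarith [mallowsPMF_nonneg hφ0 π₀ π, one_sub_pow_le (show -1 ≤ φ by linarith) m]
  have hm : (m : ℝ) ≤ 2 * (((π₀.symm b : ℕ) : ℝ) - (π₀.symm a : ℕ)) := by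
    have := dKT_swap_mul_self_lt hab
    have : (π₀.symm a : ℕ) < π₀.symm b := hab
    rw [← Nat.cast_sub this.le]
    exact_mod_cast by omega
  calc _ = ∑ π, if π.symm a < π.symm b
          then mallowsPMF φ π₀ π - mallowsPMF φ π₀ (swap a b * π) else 0 := by
        rw [hreindex, mProb, ← sum_sub_distrib]
        exact sum_congr rfl fun π _ => by split_ifs <;> simp
    _ ≤ ∑ π, mallowsPMF φ π₀ π * (m * (1 - φ)) := by
        refine sum_le_sum fun π _ => ?_
        split_ifs
        · exact hpoint π
        · exact mul_nonneg (mallowsPMF_nonneg hφ0 π₀ π) (by nlinarith)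
    _ = m * (1 - φ) := by rw [← sum_mul, sum_mallowsPMF hφ0, one_mul]
    _ ≤ 2 * (1 - φ) * (((π₀.symm b : ℕ) : ℝ) - (π₀.symm a : ℕ)) := by nlinarith

lemma mExp_dKT_sub_dKT_le (hφ0 : 0 ≤ φ) (hφ1 : φ ≤ 1) (π₀ σ₀ : Perm (Fin n)) :
    mExp φ π₀ (fun π => (dKT π σ₀ : ℝ) - dKT π π₀) ≤ (1 - φ) * ‖posVec π₀ - posVec σ₀‖ ^ 2 :=
  calc mExp φ π₀ (fun π => (dKT π σ₀ : ℝ) - dKT π π₀)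
      = ∑ p ∈ discordantPairs π₀ σ₀, (mProb φ π₀ (fun π => π.symm p.1 < π.symm p.2) -
          mProb φ π₀ (fun π => π.symm p.2 < π.symm p.1)) := by
        simp only [mExp, mProb, dKT_sub_dKT_eq_sum, mul_sum, mul_sub, mul_ite, mul_one, mul_zero,
          sum_sub_distrib]
        rw [sum_comm, sum_comm (s := univ)]
        congr!
    _ ≤ ∑ p ∈ discordantPairs π₀ σ₀,
          2 * (1 - φ) * (((π₀.symm p.2 : ℕ) : ℝ) - (π₀.symm p.1 : ℕ)) :=
        sum_le_sum fun p hp =>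
          mProb_lt_sub_mProb_gt_le hφ0 hφ1 (mem_discordantPairs.1 hp).1
    _ = (1 - φ) * ‖posVec π₀ - posVec σ₀‖ ^ 2 := by
        rw [← mul_sum, sum_discordantPairs_sub_eq_norm_sq]
        ring

lemma sq_div_add_le_sub_mul_log_sub {p q : ℝ} (hp : 0 < p) (hq : 0 < q) :
    (p - q) ^ 2 / (p + q) ≤ (p - q) * (Real.log p - Real.log q) := by
  wlog hqp : q ≤ p generalizing p q
  · calc (p - q) ^ 2 / (p + q) = (q - p) ^ 2 / (q + p) := by ring
      _ ≤ (q - p) * (Real.log q - Real.log p) := this hq hp (le_of_not_ge hqp)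
      _ = (p - q) * (Real.log p - Real.log q) := by ring
  have hlog : (p - q) / p ≤ Real.log p - Real.log q := by
    rw [← Real.log_div hp.ne' hq.ne']
    calc (p - q) / p = 1 - (p / q)⁻¹ := by field_simp
      _ ≤ Real.log (p / q) := Real.one_sub_inv_le_log_of_pos (div_pos hp hq)
  calc (p - q) ^ 2 / (p + q) ≤ (p - q) ^ 2 / p :=
        div_le_div_of_nonneg_left (sq_nonneg _) hp (by linarith)
    _ = (p - q) * ((p - q) / p) := by ring
    _ ≤ (p - q) * (Real.log p - Real.log q) := mul_le_mul_of_nonneg_left hlog (by linarith)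

lemma sq_sum_abs_sub_le_two_mul_sum_sub_mul_log_sub {ι : Type*} [Fintype ι] {p q : ι → ℝ}
    (hp : ∀ i, 0 < p i) (hq : ∀ i, 0 < q i) (hp1 : ∑ i, p i = 1) (hq1 : ∑ i, q i = 1) :
    (∑ i, |p i - q i|) ^ 2 ≤ 2 * ∑ i, (p i - q i) * (Real.log (p i) - Real.log (q i)) := by
  have htitu := sq_sum_div_le_sum_sq_div univ (fun i => |p i - q i|)
    fun i _ => add_pos (hp i) (hq i)
  rw [sum_add_distrib, hp1, hq1, one_add_one_eq_two, div_le_iff₀' two_pos] at htitu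
  simp only [sq_abs] at htitu
  exact htitu.trans (by gcongr with i; exact sq_div_add_le_sub_mul_log_sub (hp i) (hq i))

lemma tvDist_le_one {p q : Perm (Fin n) → ℝ} (hp : ∀ π, 0 ≤ p π) (hq : ∀ π, 0 ≤ q π)
    (hp1 : ∑ π, p π = 1) (hq1 : ∑ π, q π = 1) : tvDist p q ≤ 1 := by
  rw [tvDist, div_le_one two_pos]
  calc ∑ π, |p π - q π| ≤ ∑ π, (p π + q π) :=
        sum_le_sum fun π _ => abs_le.2 ⟨by linarith [hp π], by linarith [hq π]⟩
    _ = 2 := by rw [sum_add_distrib, hp1, hq1, one_add_one_eq_two]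

lemma sum_sub_mul_log_sub_mallowsPMF_eq (hφ : 0 < φ) (π₀ σ₀ : Perm (Fin n)) :
    ∑ π, (mallowsPMF φ π₀ π - mallowsPMF φ σ₀ π) *
        (Real.log (mallowsPMF φ π₀ π) - Real.log (mallowsPMF φ σ₀ π)) =
      -Real.log φ * (mExp φ π₀ (fun π => (dKT π σ₀ : ℝ) - dKT π π₀) +
        mExp φ σ₀ (fun π => (dKT π π₀ : ℝ) - dKT π σ₀)) := by
  set c := Real.log (∑ σ, φ ^ dKT σ σ₀) - Real.log (∑ σ, φ ^ dKT σ π₀)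
  have hlog (ρ π : Perm (Fin n)) : Real.log (mallowsPMF φ ρ π) =
      dKT π ρ * Real.log φ - Real.log (∑ σ, φ ^ dKT σ ρ) := by
    rw [mallowsPMF, Real.log_div (pow_pos hφ _).ne' (sum_pow_dKT_pos hφ.le ρ).ne', Real.log_pow]
  have hsplit (π : Perm (Fin n)) : (mallowsPMF φ π₀ π - mallowsPMF φ σ₀ π) *
      (Real.log (mallowsPMF φ π₀ π) - Real.log (mallowsPMF φ σ₀ π)) =
      -Real.log φ * (mallowsPMF φ π₀ π * (dKT π σ₀ - dKT π π₀) +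
        mallowsPMF φ σ₀ π * (dKT π π₀ - dKT π σ₀)) +
      (mallowsPMF φ π₀ π - mallowsPMF φ σ₀ π) * c := by
    rw [hlog, hlog]; ring
  rw [sum_congr rfl fun π _ => hsplit π, sum_add_distrib, ← sum_mul, sum_sub_distrib,
    sum_mallowsPMF hφ.le, sum_mallowsPMF hφ.le, sub_self, zero_mul, add_zero, ← mul_sum,
    sum_add_distrib, mExp, mExp]

lemma one_le_norm_posVec_sub {π₀ σ₀ : Perm (Fin n)} (h : π₀ ≠ σ₀) :
    1 ≤ ‖posVec π₀ - posVec σ₀‖ := by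
  obtain ⟨i, hi⟩ : ∃ i, π₀.symm i ≠ σ₀.symm i := by
    by_contra! h'
    exact h (by simpa using congrArg Equiv.symm (Equiv.ext h'))
  have hint : ((π₀.symm i : ℕ) : ℤ) - (σ₀.symm i : ℕ) ≠ 0 := by
    rw [sub_ne_zero, Ne, Nat.cast_inj]
    exact Fin.val_injective.ne hi
  calc (1 : ℝ) ≤ |((π₀.symm i : ℕ) : ℝ) - (σ₀.symm i : ℕ)| := by
        exact_mod_cast Int.one_le_abs hint
    _ = ‖(posVec π₀ - posVec σ₀) i‖ := by simp [posVec, Real.norm_eq_abs]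
    _ ≤ ‖posVec π₀ - posVec σ₀‖ := PiLp.norm_apply_le _ i

lemma neg_log_le_two_mul_one_sub (hφ : 1 / 2 ≤ φ) (hφ1 : φ ≤ 1) : -Real.log φ ≤ 2 * (1 - φ) := by
  have hφpos : 0 < φ := by linarith
  have hinv : φ⁻¹ - 1 ≤ 2 * (1 - φ) := by
    rw [inv_eq_one_div, div_sub_one hφpos.ne', div_le_iff₀ hφpos]
    nlinarith [mul_nonneg (sub_nonneg.2 hφ1) (sub_nonneg.2 hφ)]
  linarith [Real.one_sub_inv_le_log_of_pos hφpos]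

lemma tvDist_mallowsPMF_sq_le (hφ : 1 / 2 ≤ φ) (hφ1 : φ ≤ 1) (π₀ σ₀ : Perm (Fin n)) :
    tvDist (mallowsPMF φ π₀) (mallowsPMF φ σ₀) ^ 2 ≤
      2 * ((1 - φ) * ‖posVec π₀ - posVec σ₀‖) ^ 2 := by
  have hφ0 : 0 ≤ φ := by linarith
  have hφpos : 0 < φ := by linarith
  have hjeffreys := sq_sum_abs_sub_le_two_mul_sum_sub_mul_log_sub
    (mallowsPMF_pos hφpos π₀) (mallowsPMF_pos hφpos σ₀)
    (sum_mallowsPMF hφ0 π₀) (sum_mallowsPMF hφ0 σ₀)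
  rw [sum_sub_mul_log_sub_mallowsPMF_eq hφpos] at hjeffreys
  have hexp₁ := mExp_dKT_sub_dKT_le hφ0 hφ1 π₀ σ₀
  have hexp₂ := mExp_dKT_sub_dKT_le hφ0 hφ1 σ₀ π₀
  rw [norm_sub_rev] at hexp₂
  have hlog := neg_log_le_two_mul_one_sub hφ hφ1
  have hlog₀ : 0 ≤ -Real.log φ := neg_nonneg.2 (Real.log_nonpos hφ0 hφ1)
  have hV : 0 ≤ 2 * (1 - φ) * ‖posVec π₀ - posVec σ₀‖ ^ 2 := by
    have : 0 ≤ 1 - φ := by linarith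
    positivity
  rw [tvDist, div_pow]
  nlinarith [mul_le_mul_of_nonneg_left (add_le_add hexp₁ hexp₂) hlog₀,
    mul_le_mul_of_nonneg_right hlog hV]

end

/-- Theorem: TV upper bound. For any `0 ≤ φ ≤ 1` and permutations
`π₀, σ₀` of `[n]`, `D_TV(M(φ, π₀), M(φ, σ₀)) ≤ 2 (1 - φ) ‖v_{π₀} - v_{σ₀}‖`. -/
theorem tv_upper_bound (n : ℕ) (φ : ℝ) (hφ0 : 0 ≤ φ) (hφ1 : φ ≤ 1)
    (π₀ σ₀ : Equiv.Perm (Fin n)) :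
    tvDist (mallowsPMF φ π₀) (mallowsPMF φ σ₀) ≤ 2 * (1 - φ) * ‖posVec π₀ - posVec σ₀‖ := by
  have hφ1' : 0 ≤ 1 - φ := by linarith
  rcases eq_or_ne π₀ σ₀ with rfl | hne
  · simp only [tvDist, sub_self, abs_zero, sum_const_zero, zero_div]
    positivity
  have htv₀ : 0 ≤ tvDist (mallowsPMF φ π₀) (mallowsPMF φ σ₀) :=
    div_nonneg (sum_nonneg fun π _ => abs_nonneg _) zero_le_two
  rcases lt_or_ge φ (1 / 2) with hφ | hφ
  · have := tvDist_le_one (mallowsPMF_nonneg hφ0 π₀) (mallowsPMF_nonneg hφ0 σ₀)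
      (sum_mallowsPMF hφ0 π₀) (sum_mallowsPMF hφ0 σ₀)
    nlinarith [one_le_norm_posVec_sub hne]
  · refine (pow_le_pow_iff_left₀ htv₀ (by positivity) two_ne_zero).1
      ((tvDist_mallowsPMF_sq_le hφ hφ1 π₀ σ₀).trans ?_)
    nlinarith [sq_nonneg ((1 - φ) * ‖posVec π₀ - posVec σ₀‖)]

end Mallows
end

section
/- For any two permutations π and σ of [n], the sum over all ordered pairs (x, y) in S(π, σ) of the quantity π^{-1}(y) − π^{-1}(x) equals (1/2)·‖v_π − v_σ‖². -/
/-!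
Write `a = v_π`, `b = v_σ`. Splitting the pairs by the sum's two terms, the left side is
`∑ i, a i * (R i - L i)`, where `R i` (resp. `L i`) counts the `j` forming a pair of `S(π, σ)`
with `i` in second (resp. first) place. Since a position is the number of elements before it,
`a i = C i + R i` and `b i = C i + L i`, with `C i` the elements before `i` in both permutations;
so the sum is `⟪a, a - b⟫`, which equals `‖a - b‖² / 2` because `‖a‖ = ‖b‖`.
-/

open scoped Classical
open Finset

namespace Mallows

section Inversions

variable {ι : Type*} [Fintype ι]

theorem sum_filter_sub_eq_sum_mul_card_sub_card (r : ι → ι → Prop) [DecidableRel r] (w : ι → ℝ) :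
    ∑ p ∈ univ.filter (fun p : ι × ι => r p.1 p.2), (w p.2 - w p.1) =
      ∑ i, w i * ((#{j | r j i} : ℝ) - #{j | r i j}) := by
  simp only [sum_sub_distrib, mul_sub, sum_filter, Fintype.sum_prod_type]
  congr 1
  · rw [sum_comm]
    simp [sum_ite, mul_comm]
  · simp [sum_ite, mul_comm]

theorem card_filter_lt_eq_val {n : ℕ} (e : ι ≃ Fin n) (i : ι) :
    #{j | e j < e i} = (e i : ℕ) := by
  rw [← Fin.card_Iio]
  exact card_equiv e (by simp)

theorem card_filter_lt_eq_add {α β : Type*} [LinearOrder α] [LinearOrder β] {b : ι → β}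
    (hb : Function.Injective b) (a : ι → α) (i : ι) :
    #{j | a j < a i} = #{j | a j < a i ∧ b j < b i} + #{j | a j < a i ∧ b i < b j} := by
  rw [← card_union_of_disjoint]
  · congr 1
    ext j
    simp only [mem_filter, mem_univ, true_and, mem_union, ← and_or_left]
    refine ⟨fun h => ⟨h, ?_⟩, And.left⟩
    rcases lt_trichotomy (b j) (b i) with hlt | heq | hgt
    · exact .inl hlt
    · exact absurd h (hb heq ▸ lt_irrefl _)
    · exact .inr hgt
  · rw [disjoint_filter]
    exact fun j _ h h' => lt_asymm h.2 h'.2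

theorem val_sub_val_eq_card_sub_card {n : ℕ} (e f : ι ≃ Fin n) (i : ι) :
    ((e i : ℕ) : ℝ) - (f i : ℕ) =
      #{j | e j < e i ∧ f i < f j} - #{j | e i < e j ∧ f j < f i} := by
  rw [← card_filter_lt_eq_val e, ← card_filter_lt_eq_val f,
    card_filter_lt_eq_add f.injective e, card_filter_lt_eq_add e.injective f]
  simp only [and_comm (a := f _ < f i)]
  push_cast
  ring

end Inversions

theorem real_inner_sub_eq_half_norm_sub_sq {E : Type*} [NormedAddCommGroup E]
    [InnerProductSpace ℝ E] {u v : E} (h : ‖u‖ = ‖v‖) :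
    inner ℝ u (u - v) = 1 / 2 * ‖u - v‖ ^ 2 := by
  rw [norm_sub_sq_real, inner_sub_right, real_inner_self_eq_norm_sq, h]
  ring

theorem norm_posVec {n : ℕ} (π σ : Equiv.Perm (Fin n)) : ‖posVec π‖ = ‖posVec σ‖ := by
  simp only [EuclideanSpace.norm_eq, posVec, Real.norm_eq_abs, sq_abs]
  rw [Equiv.sum_comp π.symm (fun k : Fin n => ((k : ℕ) : ℝ) ^ 2),
    Equiv.sum_comp σ.symm (fun k : Fin n => ((k : ℕ) : ℝ) ^ 2)]

theorem inner_posVec {n : ℕ} (π : Equiv.Perm (Fin n)) (v : EuclideanSpace ℝ (Fin n)) :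
    inner ℝ (posVec π) v = ∑ i, ((π.symm i : ℕ) : ℝ) * v i := by
  simp [posVec, PiLp.inner_apply, mul_comm]

/-- Combinatorial identity. The sum over ordered pairs `(x, y) ∈ S(π, σ)`
(pairs with `x` before `y` in `π` and `y` before `x` in `σ`) of `π⁻¹ y - π⁻¹ x` equals
`(1/2) ‖v_π - v_σ‖²`. -/
theorem sum_identity (n : ℕ) (π σ : Equiv.Perm (Fin n)) :
    ∑ p ∈ Finset.univ.filter (fun p : Fin n × Fin n =>
        π.symm p.1 < π.symm p.2 ∧ σ.symm p.2 < σ.symm p.1),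
      (((π.symm p.2).1 : ℝ) - ((π.symm p.1).1 : ℝ))
      = (1 / 2) * ‖posVec π - posVec σ‖ ^ 2 := by
  rw [sum_filter_sub_eq_sum_mul_card_sub_card (fun x y => π.symm x < π.symm y ∧ σ.symm y < σ.symm x)
      (fun i => ((π.symm i : ℕ) : ℝ)),
    ← real_inner_sub_eq_half_norm_sub_sq (norm_posVec π σ), inner_posVec]
  refine sum_congr rfl fun i _ => ?_
  rw [← val_sub_val_eq_card_sub_card]
  rfl

end Mallows
end

section
/- Let M(φ, π*) be a Mallows model on n elements with 0 ≤ φ ≤ 1, and let 1 ≤ a < b ≤ n. Let P be the probability that the element π*(b) appears before the element π*(a) in a random sample π drawn from M(φ, π*). Then 1/2 − 8(b − a)(1 − φ) ≤ P ≤ 1/2 − 0.01·min(1, (b − a)(1 − φ)). -/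
open scoped Classical
open Finset

namespace Mallows

private lemma key_ite (A A2 P P2 : Prop) [Decidable A] [Decidable A2] [Decidable P] [Decidable P2]
    (h1 : A2 → A) (h2 : P2 → P) :
    ((if ¬(P2 ↔ A) then 1 else 0) + (if ¬(P ↔ A2) then 1 else 0) : ℕ)
      = (if ¬(P ↔ A) then 1 else 0) + (if ¬(P2 ↔ A2) then 1 else 0)
        + 2 * (if (A ∧ ¬A2) ∧ P ∧ ¬P2 then 1 else 0) := by
  by_cases hA : A <;> by_cases hA2 : A2 <;> by_cases hP : P <;> by_cases hP2 : P2 <;> simp_all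

/-- symmetry of the disagreement condition -/
private lemma C_symm {n : ℕ} (π σ : Equiv.Perm (Fin n)) {p q : Fin n} (hpq : p ≠ q) :
    (¬((π.symm p < π.symm q) ↔ (σ.symm p < σ.symm q)))
      ↔ (¬((π.symm q < π.symm p) ↔ (σ.symm q < σ.symm p))) := by
  have h1 : π.symm p ≠ π.symm q := fun h => hpq (π.symm.injective h)
  have h2 : σ.symm p ≠ σ.symm q := fun h => hpq (σ.symm.injective h)
  rcases h1.lt_or_gt with h | h <;> rcases h2.lt_or_gt with h' | h' <;>
    simp_all [not_lt_of_gt, le_of_lt]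

private lemma two_mul_dKT {n : ℕ} (π σ : Equiv.Perm (Fin n)) :
    2 * dKT π σ = ∑ p : Fin n, ∑ q : Fin n,
      (if p ≠ q ∧ ¬((π.symm p < π.symm q) ↔ (σ.symm p < σ.symm q)) then 1 else 0) := by
  have hsplit : ∀ p q : Fin n,
      (if p ≠ q ∧ ¬((π.symm p < π.symm q) ↔ (σ.symm p < σ.symm q)) then 1 else 0 : ℕ)
        = (if p < q ∧ ¬((π.symm p < π.symm q) ↔ (σ.symm p < σ.symm q)) then 1 else 0)
          + (if q < p ∧ ¬((π.symm p < π.symm q) ↔ (σ.symm p < σ.symm q)) then 1 else 0) := by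
    intro p q
    rcases lt_trichotomy p q with h | h | h <;>
      by_cases hC : ¬((π.symm p < π.symm q) ↔ (σ.symm p < σ.symm q)) <;>
      simp_all [ne_of_lt, ne_of_gt, not_lt_of_gt]
  have hd : dKT π σ = ∑ p : Fin n, ∑ q : Fin n,
      (if p < q ∧ ¬((π.symm p < π.symm q) ↔ (σ.symm p < σ.symm q)) then 1 else 0) := by
    rw [dKT, Finset.card_filter, Fintype.sum_prod_type]
  have hd2 : dKT π σ = ∑ p : Fin n, ∑ q : Fin n,
      (if q < p ∧ ¬((π.symm p < π.symm q) ↔ (σ.symm p < σ.symm q)) then 1 else 0) := by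
    rw [hd, Finset.sum_comm]
    refine Finset.sum_congr rfl fun p _ => Finset.sum_congr rfl fun q _ => ?_
    by_cases h : q < p
    · simp only [h, true_and]
      exact if_congr (C_symm π σ (ne_of_lt h)) rfl rfl
    · simp [h]
  rw [two_mul]
  nth_rewrite 1 [hd]
  rw [hd2, ← Finset.sum_add_distrib]
  refine Finset.sum_congr rfl fun p _ => ?_
  rw [← Finset.sum_add_distrib]
  exact Finset.sum_congr rfl fun q _ => (hsplit p q).symm


private lemma peel_two {n : ℕ} {M : Type*} [AddCommMonoid M] (u w : Fin n) (huw : u ≠ w)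
    (G : Fin n → M) :
    ∑ p : Fin n, G p = (∑ p ∈ (univ.erase w).erase u, G p) + G u + G w := by
  rw [add_assoc]
  rw [← Finset.sum_erase_add univ G (Finset.mem_univ w)]
  rw [← Finset.sum_erase_add (univ.erase w) G (Finset.mem_erase.2 ⟨huw, Finset.mem_univ u⟩)]
  rw [add_assoc]

private lemma double_peel {n : ℕ} {M : Type*} [AddCommMonoid M] (u w : Fin n) (huw : u ≠ w)
    (h : Fin n → Fin n → M) :
    ∑ p : Fin n, ∑ q : Fin n, h p q
      = (∑ p ∈ (univ.erase w).erase u, ∑ q ∈ (univ.erase w).erase u, h p q)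
        + (∑ j ∈ (univ.erase w).erase u, (h u j + h j u + h w j + h j w))
        + (h u u + h u w + h w u + h w w) := by
  set t := (univ.erase w).erase u with ht
  rw [peel_two u w huw (fun p => ∑ q : Fin n, h p q)]
  rw [peel_two u w huw (fun q => h u q), peel_two u w huw (fun q => h w q)]
  have : ∀ p ∈ t, ∑ q : Fin n, h p q = (∑ q ∈ t, h p q) + h p u + h p w := by
    intro p _
    exact peel_two u w huw (fun q => h p q)
  rw [Finset.sum_congr rfl this]
  simp only [Finset.sum_add_distrib]
  abel

lemma dKT_swap {n : ℕ} (π₀ π : Equiv.Perm (Fin n)) (u w : Fin n)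
    (hg : π₀.symm u < π₀.symm w) (hf : π.symm u < π.symm w) :
    dKT (π.trans (Equiv.swap u w)) π₀
      = dKT π π₀ + 1 + 2 * (univ.filter (fun j : Fin n =>
          (π₀.symm u < π₀.symm j ∧ π₀.symm j < π₀.symm w) ∧
          (π.symm u < π.symm j ∧ π.symm j < π.symm w))).card := by
  have huw : u ≠ w := by
    intro h; subst h; exact lt_irrefl _ hg
  set f := π.symm with hfdef
  set g := π₀.symm with hgdef
  set π' := π.trans (Equiv.swap u w) with hπ'
  have hf' : ∀ x, π'.symm x = f (Equiv.swap u w x) := by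
    intro x
    simp [hπ', Equiv.symm_trans_apply, hfdef]
  have hfu : π'.symm u = f w := by rw [hf', Equiv.swap_apply_left]
  have hfw : π'.symm w = f u := by rw [hf', Equiv.swap_apply_right]
  have hfother : ∀ x, x ≠ u → x ≠ w → π'.symm x = f x := by
    intro x h1 h2; rw [hf', Equiv.swap_apply_of_ne_of_ne h1 h2]
  -- indicator functions
  set F : Fin n → Fin n → ℕ := fun p q =>
    if p ≠ q ∧ ¬((f p < f q) ↔ (g p < g q)) then 1 else 0 with hF
  set F' : Fin n → Fin n → ℕ := fun p q =>
    if p ≠ q ∧ ¬((π'.symm p < π'.symm q) ↔ (g p < g q)) then 1 else 0 with hF'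
  have h2d : 2 * dKT π π₀ = ∑ p : Fin n, ∑ q : Fin n, F p q := two_mul_dKT π π₀
  have h2d' : 2 * dKT π' π₀ = ∑ p : Fin n, ∑ q : Fin n, F' p q := two_mul_dKT π' π₀
  set t := (univ.erase w).erase u with htdef
  have hmem : ∀ j ∈ t, j ≠ u ∧ j ≠ w := by
    intro j hj
    rw [htdef, Finset.mem_erase, Finset.mem_erase] at hj
    exact ⟨hj.1, hj.2.1⟩
  -- corner values
  have hFuu : F u u = 0 := by simp [hF]
  have hFww : F w w = 0 := by simp [hF]
  have hF'uu : F' u u = 0 := by simp [hF']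
  have hF'ww : F' w w = 0 := by simp [hF']
  have hFuw : F u w = 0 := by simp [hF, hf, hg]
  have hFwu : F w u = 0 := by
    simp [hF, not_lt_of_gt hf, not_lt_of_gt hg]
  have hF'uw : F' u w = 1 := by
    simp [hF', hfu, hfw, huw, not_lt_of_gt hf, hg]
  have hF'wu : F' w u = 1 := by
    simp [hF', hfu, hfw, Ne.symm huw, hf, not_lt_of_gt hg]
  -- middle-element indicator
  set betw : Fin n → ℕ := fun j =>
    if (g u < g j ∧ g j < g w) ∧ (f u < f j ∧ f j < f w) then 1 else 0 with hbetw
  have hFsym : ∀ p q : Fin n, p ≠ q → F p q = F q p := by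
    intro p q hpq
    simp only [hF]
    exact if_congr (and_congr ne_comm (C_symm π π₀ hpq)) rfl rfl
  have hF'sym : ∀ p q : Fin n, p ≠ q → F' p q = F' q p := by
    intro p q hpq
    simp only [hF']
    exact if_congr (and_congr ne_comm (C_symm π' π₀ hpq)) rfl rfl
  have hcross : ∀ j ∈ t, F' u j + F' j u + F' w j + F' j w
      = F u j + F j u + F w j + F j w + 2 * (2 * betw j) := by
    intro j hj
    obtain ⟨hju, hjw⟩ := hmem j hj
    have hgjw : g j ≠ g w := fun e => hjw (π₀.symm.injective e)
    have hfjw : f j ≠ f w := fun e => hjw (π.symm.injective e)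
    have hA2iff : (g j < g w) ↔ ¬ (g w < g j) :=
      ⟨fun h => not_lt_of_gt h, fun h => lt_of_le_of_ne (le_of_not_gt h) hgjw⟩
    have hP2iff : (f j < f w) ↔ ¬ (f w < f j) :=
      ⟨fun h => not_lt_of_gt h, fun h => lt_of_le_of_ne (le_of_not_gt h) hfjw⟩
    have hbj : betw j = if ((g u < g j) ∧ ¬(g w < g j)) ∧ (f u < f j) ∧ ¬(f w < f j)
        then 1 else 0 := by
      simp only [hbetw]
      exact if_congr (and_congr (and_congr Iff.rfl hA2iff) (and_congr Iff.rfl hP2iff)) rfl rfl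
    have hFuj : F u j = if ¬((f u < f j) ↔ (g u < g j)) then 1 else 0 := by
      simp only [hF]
      exact if_congr (by simp [hju.symm]) rfl rfl
    have hFwj : F w j = if ¬((f w < f j) ↔ (g w < g j)) then 1 else 0 := by
      simp only [hF]
      exact if_congr (by simp [hjw.symm]) rfl rfl
    have hF'uj : F' u j = if ¬((f w < f j) ↔ (g u < g j)) then 1 else 0 := by
      simp only [hF']
      exact if_congr (by simp [hju.symm, hfu, hfother j hju hjw]) rfl rfl
    have hF'wj : F' w j = if ¬((f u < f j) ↔ (g w < g j)) then 1 else 0 := by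
      simp only [hF']
      exact if_congr (by simp [hjw.symm, hfw, hfother j hju hjw]) rfl rfl
    rw [← hFsym u j hju.symm, ← hFsym w j hjw.symm, ← hF'sym u j hju.symm,
      ← hF'sym w j hjw.symm]
    have key := key_ite (g u < g j) (g w < g j) (f u < f j) (f w < f j)
      (fun h => lt_trans hg h) (fun h => lt_trans hf h)
    rw [hFuj, hFwj, hF'uj, hF'wj, hbj]
    omega
  have hcorner : ∀ p ∈ t, ∀ q ∈ t, F' p q = F p q := by
    intro p hp q hq
    obtain ⟨hpu, hpw⟩ := hmem p hp
    obtain ⟨hqu, hqw⟩ := hmem q hq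
    simp only [hF, hF', hfother p hpu hpw, hfother q hqu hqw]
  rw [double_peel u w huw F'] at h2d'
  rw [double_peel u w huw F] at h2d
  rw [← htdef] at h2d h2d'
  have hmid : ∑ j ∈ t, (F' u j + F' j u + F' w j + F' j w)
      = (∑ j ∈ t, (F u j + F j u + F w j + F j w)) + ∑ j ∈ t, 2 * (2 * betw j) := by
    rw [← Finset.sum_add_distrib]
    exact Finset.sum_congr rfl hcross
  have hinner : ∑ p ∈ t, ∑ q ∈ t, F' p q = ∑ p ∈ t, ∑ q ∈ t, F p q :=
    Finset.sum_congr rfl fun p hp => Finset.sum_congr rfl fun q hq => hcorner p hp q hq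
  have hcard : (univ.filter (fun j : Fin n =>
      (g u < g j ∧ g j < g w) ∧ (f u < f j ∧ f j < f w))).card
      = ∑ j ∈ t, betw j := by
    rw [Finset.card_filter]
    rw [peel_two u w huw betw]
    have h1 : betw u = 0 := by simp [hbetw]
    have h2 : betw w = 0 := by simp [hbetw]
    rw [h1, h2, add_zero, add_zero]
  rw [hcard]
  have hsum2 : ∑ j ∈ t, 2 * (2 * betw j) = 4 * ∑ j ∈ t, betw j := by
    rw [Finset.mul_sum]
    exact Finset.sum_congr rfl fun j _ => by ring
  rw [hmid, hinner, hsum2] at h2d'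
  rw [hFuu, hFww, hFuw, hFwu] at h2d
  rw [hF'uu, hF'ww, hF'uw, hF'wu] at h2d'
  omega




lemma dKT_swap_le {n : ℕ} (π₀ π : Equiv.Perm (Fin n)) (u w : Fin n)
    (hg : π₀.symm u < π₀.symm w) (hf : π.symm w < π.symm u) :
    dKT (π.trans (Equiv.swap u w)) π₀ ≤ dKT π π₀ := by
  set π' := π.trans (Equiv.swap u w) with hπ'
  have h1 : π'.symm u = π.symm w := by simp [hπ', Equiv.symm_trans_apply]
  have h2 : π'.symm w = π.symm u := by simp [hπ', Equiv.symm_trans_apply]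
  have hback : π'.trans (Equiv.swap u w) = π := by
    rw [hπ', Equiv.trans_assoc, Equiv.swap_swap, Equiv.trans_refl]
  have hkey := dKT_swap π₀ π' u w hg (by rw [h1, h2]; exact hf)
  rw [hback] at hkey
  omega

lemma one_sub_pow_le_nat (φ : ℝ) (h0 : 0 ≤ φ) (m : ℕ) : 1 - φ ^ m ≤ (m : ℝ) * (1 - φ) := by
  have h := one_add_mul_le_pow (a := φ - 1) (by linarith) m
  have h' : (1 : ℝ) + (m : ℝ) * (φ - 1) ≤ φ ^ m := by
    simpa using h
  nlinarith [h']

private lemma geom_repr (φ : ℝ) (m : ℕ) :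
    1 - φ ^ m = (1 - φ) * ∑ i ∈ Finset.range m, φ ^ i := by
  linear_combination geom_sum_mul φ m

private lemma sum_pow_ge (φ : ℝ) (h0 : 0 ≤ φ) (h1 : φ ≤ 1) (k : ℕ) :
    (k : ℝ) * φ ^ k ≤ ∑ i ∈ Finset.range k, φ ^ i := by
  have := Finset.card_nsmul_le_sum (Finset.range k) (fun i => φ ^ i) (φ ^ k)
    (fun i hi => pow_le_pow_of_le_one h0 h1 (le_of_lt (Finset.mem_range.mp hi)))
  simpa [nsmul_eq_mul] using this

lemma conc_pow (φ : ℝ) (h0 : 0 ≤ φ) (h1 : φ ≤ 1) {k K : ℕ} (hkK : k ≤ K) :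
    (k : ℝ) * (1 - φ ^ K) ≤ (K : ℝ) * (1 - φ ^ k) := by
  have hSk := sum_pow_ge φ h0 h1 k
  have hT : ∑ i ∈ Finset.Ico k K, φ ^ i ≤ ((K : ℝ) - (k : ℝ)) * φ ^ k := by
    have h := Finset.sum_le_card_nsmul (Finset.Ico k K) (fun i => φ ^ i) (φ ^ k)
      (fun i hi => pow_le_pow_of_le_one h0 h1 (Finset.mem_Ico.mp hi).1)
    rw [Nat.card_Ico] at h
    have hc : ((K - k : ℕ) : ℝ) = (K : ℝ) - (k : ℝ) := by
      rw [Nat.cast_sub hkK]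
    calc ∑ i ∈ Finset.Ico k K, φ ^ i ≤ (K - k : ℕ) • φ ^ k := h
      _ = ((K : ℝ) - (k : ℝ)) * φ ^ k := by rw [nsmul_eq_mul, hc]
  have hsplit : ∑ i ∈ Finset.range K, φ ^ i
      = ∑ i ∈ Finset.range k, φ ^ i + ∑ i ∈ Finset.Ico k K, φ ^ i := by
    rw [Finset.range_eq_Ico, Finset.range_eq_Ico]
    exact (Finset.sum_Ico_consecutive (fun i => φ ^ i) (Nat.zero_le k) hkK).symm
  have hφ : (0 : ℝ) ≤ 1 - φ := by linarith
  have hkK' : (k : ℝ) ≤ (K : ℝ) := Nat.cast_le.mpr hkK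
  have hb : 0 ≤ (K : ℝ) * (∑ i ∈ Finset.range k, φ ^ i)
      - (k : ℝ) * ((∑ i ∈ Finset.range k, φ ^ i) + ∑ i ∈ Finset.Ico k K, φ ^ i) := by
    nlinarith [mul_nonneg (sub_nonneg.2 hkK') (sub_nonneg.2 hSk),
      mul_nonneg (Nat.cast_nonneg (α := ℝ) k) (sub_nonneg.2 (le_trans hT (le_refl _))),
      mul_nonneg (Nat.cast_nonneg (α := ℝ) k) (sub_nonneg.2 hT)]
  rw [geom_repr φ K, geom_repr φ k, hsplit]
  nlinarith [mul_nonneg hφ hb]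

lemma min_le_one_sub_pow (φ : ℝ) (h0 : 0 ≤ φ) (h1 : φ ≤ 1) (d : ℕ) (hd : 1 ≤ d) :
    min 1 ((d : ℝ) * (1 - φ)) ≤ 2 * (1 - φ ^ (2 * d)) := by
  have hp1 : φ ^ (2 * d) ≤ φ ^ d :=
    pow_le_pow_of_le_one h0 h1 (by omega)
  by_cases hc : (d : ℝ) * (1 - φ) ≤ 1 / 2
  · -- small case
    have hber : (1 : ℝ) + (d : ℝ) * (φ - 1) ≤ φ ^ d := by
      simpa using one_add_mul_le_pow (a := φ - 1) (by linarith) d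
    have hφd : (1 : ℝ) / 2 ≤ φ ^ d := by nlinarith [hber]
    have hS := sum_pow_ge φ h0 h1 d
    have hgr := geom_repr φ d
    have h2 : (d : ℝ) * (1 - φ) / 2 ≤ 1 - φ ^ d := by
      have hφ : (0 : ℝ) ≤ 1 - φ := by linarith
      nlinarith [mul_le_mul_of_nonneg_left hS hφ, mul_nonneg hφ (mul_nonneg (Nat.cast_nonneg (α := ℝ) d) (by linarith : (0:ℝ) ≤ φ ^ d - 1/2))]
    calc min 1 ((d : ℝ) * (1 - φ)) ≤ (d : ℝ) * (1 - φ) := min_le_right _ _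
      _ ≤ 2 * (1 - φ ^ d) := by linarith
      _ ≤ 2 * (1 - φ ^ (2 * d)) := by linarith
  · -- large case : φ^(2d) ≤ 1/2
    push_neg at hc
    have hexp : φ ≤ Real.exp (φ - 1) := by
      have := Real.add_one_le_exp (φ - 1); linarith
    have hpow : φ ^ (2 * d) ≤ Real.exp (φ - 1) ^ (2 * d) :=
      pow_le_pow_left₀ h0 hexp _
    have hpe : Real.exp (φ - 1) ^ (2 * d) = Real.exp ((2 * d : ℕ) * (φ - 1)) := by
      rw [← Real.exp_nat_mul]
    have hle : ((2 * d : ℕ) : ℝ) * (φ - 1) ≤ -1 := by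
      push_cast
      nlinarith [hc]
    have hexp2 : Real.exp (((2 * d : ℕ) : ℝ) * (φ - 1)) ≤ Real.exp (-1) :=
      Real.exp_le_exp.mpr hle
    have hme : Real.exp (-1) ≤ 1 / 2 := by
      have hmul : Real.exp (-1) * Real.exp 1 = 1 := by
        rw [← Real.exp_add]; norm_num
      have h2e : (2 : ℝ) ≤ Real.exp 1 := by
        have := Real.add_one_le_exp 1; linarith
      have hpos : (0 : ℝ) < Real.exp (-1) := Real.exp_pos _
      nlinarith [hmul, h2e, hpos]
    have : φ ^ (2 * d) ≤ 1 / 2 := by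
      calc φ ^ (2 * d) ≤ Real.exp (φ - 1) ^ (2 * d) := hpow
        _ = Real.exp (((2 * d : ℕ) : ℝ) * (φ - 1)) := hpe
        _ ≤ Real.exp (-1) := hexp2
        _ ≤ 1 / 2 := hme
    calc min 1 ((d : ℝ) * (1 - φ)) ≤ 1 := min_le_left _ _
      _ ≤ 2 * (1 - φ ^ (2 * d)) := by linarith

set_option maxHeartbeats 1000000 in
lemma sum_pattern_le {n : ℕ} (π₀ : Equiv.Perm (Fin n)) (φ : ℝ) (h0 : 0 ≤ φ) (h1 : φ ≤ 1)
    (u j w : Fin n) (h : Equiv.Perm (Fin n)) (S : Finset (Equiv.Perm (Fin n)))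
    (hmap : ∀ π ∈ S, dKT (π.trans h) π₀ ≤ dKT π π₀ ∧
      ((π.trans h).symm u < (π.trans h).symm j ∧ (π.trans h).symm j < (π.trans h).symm w)) :
    ∑ π ∈ S, φ ^ dKT π π₀ ≤ ∑ π ∈ univ.filter (fun π : Equiv.Perm (Fin n) =>
      π.symm u < π.symm j ∧ π.symm j < π.symm w), φ ^ dKT π π₀ := by
  have hinj : ∀ x ∈ S, ∀ y ∈ S, x.trans h = y.trans h → x = y := by
    intro x _ y _ hxy
    have := congrArg (fun e => e.trans h.symm) hxy
    simpa [Equiv.trans_assoc] using this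
  calc ∑ π ∈ S, φ ^ dKT π π₀ ≤ ∑ π ∈ S, φ ^ dKT (π.trans h) π₀ :=
        Finset.sum_le_sum fun π hπ => pow_le_pow_of_le_one h0 h1 (hmap π hπ).1
    _ = ∑ π ∈ S.image (fun π => π.trans h), φ ^ dKT π π₀ := (Finset.sum_image (f := fun π => φ ^ dKT π π₀) hinj).symm
    _ ≤ _ := by
        refine Finset.sum_le_sum_of_subset_of_nonneg ?_ (fun i _ _ => pow_nonneg h0 _)
        intro x hx
        rw [Finset.mem_image] at hx
        obtain ⟨π, hπ, rfl⟩ := hx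
        rw [Finset.mem_filter]
        exact ⟨Finset.mem_univ _, (hmap π hπ).2⟩


set_option maxHeartbeats 2000000 in
lemma triple_ge {n : ℕ} (π₀ : Equiv.Perm (Fin n)) (φ : ℝ) (h0 : 0 ≤ φ) (h1 : φ ≤ 1)
    (u j w : Fin n) (hgu : π₀.symm u < π₀.symm j) (hgw : π₀.symm j < π₀.symm w) :
    (∑ σ : Equiv.Perm (Fin n), φ ^ dKT σ π₀)
      ≤ 6 * ∑ π ∈ univ.filter (fun π : Equiv.Perm (Fin n) =>
          π.symm u < π.symm j ∧ π.symm j < π.symm w), φ ^ dKT π π₀ := by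
  have hguw : π₀.symm u < π₀.symm w := lt_trans hgu hgw
  have huj : u ≠ j := fun e => (ne_of_lt hgu) (congrArg π₀.symm e)
  have hjw : j ≠ w := fun e => (ne_of_lt hgw) (congrArg π₀.symm e)
  have huw : u ≠ w := fun e => (ne_of_lt hguw) (congrArg π₀.symm e)
  set A : Equiv.Perm (Fin n) → Prop := fun π => π.symm u < π.symm j with hAdef
  set B : Equiv.Perm (Fin n) → Prop := fun π => π.symm j < π.symm w with hBdef
  set C : Equiv.Perm (Fin n) → Prop := fun π => π.symm u < π.symm w with hCdef
  set F : Equiv.Perm (Fin n) → ℝ := fun π => φ ^ dKT π π₀ with hFdef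
  have hsplit1 := Finset.sum_filter_add_sum_filter_not (univ : Finset (Equiv.Perm (Fin n))) A F
  have hsplit2 := Finset.sum_filter_add_sum_filter_not (univ.filter A) B F
  have hsplit3 := Finset.sum_filter_add_sum_filter_not
    ((univ.filter A).filter (fun π => ¬ B π)) C F
  have hsplit4 := Finset.sum_filter_add_sum_filter_not (univ.filter (fun π => ¬ A π)) B F
  have hsplit5 := Finset.sum_filter_add_sum_filter_not
    ((univ.filter (fun π => ¬ A π)).filter B) C F
  -- the "correct" pattern sum is exactly the target
  have hS1 : ∑ π ∈ (univ.filter A).filter B, F π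
      = ∑ π ∈ univ.filter (fun π : Equiv.Perm (Fin n) =>
          π.symm u < π.symm j ∧ π.symm j < π.symm w), F π := by
    rw [Finset.filter_filter]
  -- distinctness of values
  have hval : ∀ (π : Equiv.Perm (Fin n)) {p q : Fin n}, p ≠ q → π.symm p ≠ π.symm q :=
    fun π p q hpq e => hpq (π.symm.injective e)
  -- pattern 2 : x < z < y,  swap j w
  have h2 : ∑ π ∈ ((univ.filter A).filter (fun π => ¬ B π)).filter C, F π
      ≤ ∑ π ∈ univ.filter (fun π : Equiv.Perm (Fin n) =>
          π.symm u < π.symm j ∧ π.symm j < π.symm w), F π := by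
    refine sum_pattern_le π₀ φ h0 h1 u j w (Equiv.swap j w) _ ?_
    intro π hπ
    simp only [Finset.mem_filter] at hπ
    obtain ⟨⟨⟨-, hA⟩, hnB⟩, hC⟩ := hπ
    have hzy : π.symm w < π.symm j := ((hval π hjw).lt_or_gt).resolve_left hnB
    have e1 : (π.trans (Equiv.swap j w)).symm u = π.symm u := by
      rw [Equiv.symm_trans_apply, Equiv.symm_swap, Equiv.swap_apply_of_ne_of_ne huj huw]
    have e2 : (π.trans (Equiv.swap j w)).symm j = π.symm w := by
      rw [Equiv.symm_trans_apply, Equiv.symm_swap, Equiv.swap_apply_left]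
    have e3 : (π.trans (Equiv.swap j w)).symm w = π.symm j := by
      rw [Equiv.symm_trans_apply, Equiv.symm_swap, Equiv.swap_apply_right]
    exact ⟨dKT_swap_le π₀ π j w hgw hzy, by rw [e1, e2, e3]; exact ⟨hC, hzy⟩⟩
  -- pattern 4 : z < x < y,  swap u w then swap j w
  have h4 : ∑ π ∈ ((univ.filter A).filter (fun π => ¬ B π)).filter (fun π => ¬ C π), F π
      ≤ ∑ π ∈ univ.filter (fun π : Equiv.Perm (Fin n) =>
          π.symm u < π.symm j ∧ π.symm j < π.symm w), F π := by
    refine sum_pattern_le π₀ φ h0 h1 u j w ((Equiv.swap u w).trans (Equiv.swap j w)) _ ?_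
    intro π hπ
    simp only [Finset.mem_filter] at hπ
    obtain ⟨⟨⟨-, hA⟩, hnB⟩, hnC⟩ := hπ
    have hzx : π.symm w < π.symm u := ((hval π huw).lt_or_gt).resolve_left hnC
    set π1 := π.trans (Equiv.swap u w) with hπ1
    have f1u : π1.symm u = π.symm w := by
      rw [hπ1, Equiv.symm_trans_apply, Equiv.symm_swap, Equiv.swap_apply_left]
    have f1w : π1.symm w = π.symm u := by
      rw [hπ1, Equiv.symm_trans_apply, Equiv.symm_swap, Equiv.swap_apply_right]
    have f1j : π1.symm j = π.symm j := by
      rw [hπ1, Equiv.symm_trans_apply, Equiv.symm_swap,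
        Equiv.swap_apply_of_ne_of_ne huj.symm hjw]
    have hd1 : dKT π1 π₀ ≤ dKT π π₀ := dKT_swap_le π₀ π u w hguw hzx
    have hassoc : π.trans ((Equiv.swap u w).trans (Equiv.swap j w))
        = π1.trans (Equiv.swap j w) := by
      rw [hπ1, Equiv.trans_assoc]
    have hzy1 : π1.symm w < π1.symm j := by rw [f1w, f1j]; exact hA
    have hd2 : dKT (π1.trans (Equiv.swap j w)) π₀ ≤ dKT π1 π₀ :=
      dKT_swap_le π₀ π1 j w hgw hzy1
    have e1 : (π1.trans (Equiv.swap j w)).symm u = π1.symm u := by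
      rw [Equiv.symm_trans_apply, Equiv.symm_swap, Equiv.swap_apply_of_ne_of_ne huj huw]
    have e2 : (π1.trans (Equiv.swap j w)).symm j = π1.symm w := by
      rw [Equiv.symm_trans_apply, Equiv.symm_swap, Equiv.swap_apply_left]
    have e3 : (π1.trans (Equiv.swap j w)).symm w = π1.symm j := by
      rw [Equiv.symm_trans_apply, Equiv.symm_swap, Equiv.swap_apply_right]
    rw [hassoc]
    refine ⟨le_trans hd2 hd1, ?_⟩
    rw [e1, e2, e3, f1u, f1w, f1j]
    exact ⟨hzx, hA⟩
  -- pattern 3 : y < x < z,  swap u j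
  have h3 : ∑ π ∈ ((univ.filter (fun π => ¬ A π)).filter B).filter C, F π
      ≤ ∑ π ∈ univ.filter (fun π : Equiv.Perm (Fin n) =>
          π.symm u < π.symm j ∧ π.symm j < π.symm w), F π := by
    refine sum_pattern_le π₀ φ h0 h1 u j w (Equiv.swap u j) _ ?_
    intro π hπ
    simp only [Finset.mem_filter] at hπ
    obtain ⟨⟨⟨-, hnA⟩, hB⟩, hC⟩ := hπ
    have hyx : π.symm j < π.symm u := ((hval π huj).lt_or_gt).resolve_left hnA
    have e1 : (π.trans (Equiv.swap u j)).symm u = π.symm j := by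
      rw [Equiv.symm_trans_apply, Equiv.symm_swap, Equiv.swap_apply_left]
    have e2 : (π.trans (Equiv.swap u j)).symm j = π.symm u := by
      rw [Equiv.symm_trans_apply, Equiv.symm_swap, Equiv.swap_apply_right]
    have e3 : (π.trans (Equiv.swap u j)).symm w = π.symm w := by
      rw [Equiv.symm_trans_apply, Equiv.symm_swap,
        Equiv.swap_apply_of_ne_of_ne huw.symm hjw.symm]
    exact ⟨dKT_swap_le π₀ π u j hgu hyx, by rw [e1, e2, e3]; exact ⟨hyx, hC⟩⟩
  -- pattern 5 : y < z < x,  swap u j then swap j w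
  have h5 : ∑ π ∈ ((univ.filter (fun π => ¬ A π)).filter B).filter (fun π => ¬ C π), F π
      ≤ ∑ π ∈ univ.filter (fun π : Equiv.Perm (Fin n) =>
          π.symm u < π.symm j ∧ π.symm j < π.symm w), F π := by
    refine sum_pattern_le π₀ φ h0 h1 u j w ((Equiv.swap u j).trans (Equiv.swap j w)) _ ?_
    intro π hπ
    simp only [Finset.mem_filter] at hπ
    obtain ⟨⟨⟨-, hnA⟩, hB⟩, hnC⟩ := hπ
    have hyx : π.symm j < π.symm u := ((hval π huj).lt_or_gt).resolve_left hnA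
    have hzx : π.symm w < π.symm u := ((hval π huw).lt_or_gt).resolve_left hnC
    set π1 := π.trans (Equiv.swap u j) with hπ1
    have f1u : π1.symm u = π.symm j := by
      rw [hπ1, Equiv.symm_trans_apply, Equiv.symm_swap, Equiv.swap_apply_left]
    have f1j : π1.symm j = π.symm u := by
      rw [hπ1, Equiv.symm_trans_apply, Equiv.symm_swap, Equiv.swap_apply_right]
    have f1w : π1.symm w = π.symm w := by
      rw [hπ1, Equiv.symm_trans_apply, Equiv.symm_swap,
        Equiv.swap_apply_of_ne_of_ne huw.symm hjw.symm]
    have hd1 : dKT π1 π₀ ≤ dKT π π₀ := dKT_swap_le π₀ π u j hgu hyx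
    have hassoc : π.trans ((Equiv.swap u j).trans (Equiv.swap j w))
        = π1.trans (Equiv.swap j w) := by
      rw [hπ1, Equiv.trans_assoc]
    have hzy1 : π1.symm w < π1.symm j := by rw [f1w, f1j]; exact hzx
    have hd2 : dKT (π1.trans (Equiv.swap j w)) π₀ ≤ dKT π1 π₀ :=
      dKT_swap_le π₀ π1 j w hgw hzy1
    have e1 : (π1.trans (Equiv.swap j w)).symm u = π1.symm u := by
      rw [Equiv.symm_trans_apply, Equiv.symm_swap, Equiv.swap_apply_of_ne_of_ne huj huw]
    have e2 : (π1.trans (Equiv.swap j w)).symm j = π1.symm w := by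
      rw [Equiv.symm_trans_apply, Equiv.symm_swap, Equiv.swap_apply_left]
    have e3 : (π1.trans (Equiv.swap j w)).symm w = π1.symm j := by
      rw [Equiv.symm_trans_apply, Equiv.symm_swap, Equiv.swap_apply_right]
    rw [hassoc]
    refine ⟨le_trans hd2 hd1, ?_⟩
    rw [e1, e2, e3, f1u, f1w, f1j]
    exact ⟨hB, hzx⟩
  -- pattern 6 : z < y < x,  swap u w
  have h6 : ∑ π ∈ (univ.filter (fun π => ¬ A π)).filter (fun π => ¬ B π), F π
      ≤ ∑ π ∈ univ.filter (fun π : Equiv.Perm (Fin n) =>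
          π.symm u < π.symm j ∧ π.symm j < π.symm w), F π := by
    refine sum_pattern_le π₀ φ h0 h1 u j w (Equiv.swap u w) _ ?_
    intro π hπ
    simp only [Finset.mem_filter] at hπ
    obtain ⟨⟨-, hnA⟩, hnB⟩ := hπ
    have hyx : π.symm j < π.symm u := ((hval π huj).lt_or_gt).resolve_left hnA
    have hzy : π.symm w < π.symm j := ((hval π hjw).lt_or_gt).resolve_left hnB
    have hzx : π.symm w < π.symm u := lt_trans hzy hyx
    have e1 : (π.trans (Equiv.swap u w)).symm u = π.symm w := by
      rw [Equiv.symm_trans_apply, Equiv.symm_swap, Equiv.swap_apply_left]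
    have e2 : (π.trans (Equiv.swap u w)).symm w = π.symm u := by
      rw [Equiv.symm_trans_apply, Equiv.symm_swap, Equiv.swap_apply_right]
    have e3 : (π.trans (Equiv.swap u w)).symm j = π.symm j := by
      rw [Equiv.symm_trans_apply, Equiv.symm_swap,
        Equiv.swap_apply_of_ne_of_ne huj.symm hjw]
    exact ⟨dKT_swap_le π₀ π u w hguw hzx, by rw [e1, e2, e3]; exact ⟨hzy, hyx⟩⟩
  linarith [h2, h3, h4, h5, h6, hsplit1, hsplit2, hsplit3, hsplit4, hsplit5, hS1]


set_option maxHeartbeats 2000000 in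
/-- Inversion probability. For positions `a < b`, the probability `P`
that element `π₀ b` appears before element `π₀ a` in a sample from `M(φ, π₀)` satisfies
`1/2 - 8 (b - a)(1 - φ) ≤ P ≤ 1/2 - 0.01 min(1, (b - a)(1 - φ))`. -/
theorem inversion_prob (n : ℕ) (φ : ℝ) (hφ0 : 0 ≤ φ) (hφ1 : φ ≤ 1)
    (π₀ : Equiv.Perm (Fin n)) (a b : Fin n) (hab : a < b) :
    1 / 2 - 8 * ((b.1 : ℝ) - (a.1 : ℝ)) * (1 - φ) ≤
        mProb φ π₀ (fun π => π.symm (π₀ b) < π.symm (π₀ a)) ∧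
      mProb φ π₀ (fun π => π.symm (π₀ b) < π.symm (π₀ a)) ≤
        1 / 2 - 0.01 * min 1 (((b.1 : ℝ) - (a.1 : ℝ)) * (1 - φ)) := by

  classical
  have hab' : a.1 < b.1 := hab
  set u := π₀ a with hu
  set w := π₀ b with hw
  set d : ℕ := b.1 - a.1 with hd
  have hd1 : 1 ≤ d := by omega
  have hDcast : ((d : ℕ) : ℝ) = (b.1 : ℝ) - (a.1 : ℝ) := by
    rw [hd, Nat.cast_sub (le_of_lt hab')]
  have hga : π₀.symm u = a := Equiv.symm_apply_apply π₀ a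
  have hgb : π₀.symm w = b := Equiv.symm_apply_apply π₀ b
  have hguw : π₀.symm u < π₀.symm w := by rw [hga, hgb]; exact hab
  have huw : u ≠ w := fun e => (ne_of_lt hguw) (congrArg π₀.symm e)
  set Z := ∑ σ : Equiv.Perm (Fin n), φ ^ dKT σ π₀ with hZdef
  have hdKT0 : dKT π₀ π₀ = 0 := by
    rw [dKT]
    rw [Finset.filter_false_of_mem, Finset.card_empty]
    rintro p - ⟨-, hni⟩
    exact hni Iff.rfl
  have hZ1 : (1 : ℝ) ≤ Z := by
    have hterm := Finset.single_le_sum (f := fun σ : Equiv.Perm (Fin n) => φ ^ dKT σ π₀)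
      (fun i _ => pow_nonneg hφ0 _) (Finset.mem_univ π₀)
    simp only [hdKT0, pow_zero] at hterm
    exact hterm
  have hZpos : (0 : ℝ) < Z := lt_of_lt_of_le one_pos hZ1
  set Cs := univ.filter (fun π : Equiv.Perm (Fin n) => ¬ (π.symm w < π.symm u)) with hCs
  set Is := univ.filter (fun π : Equiv.Perm (Fin n) => π.symm w < π.symm u) with hIs
  set WC := ∑ π ∈ Cs, φ ^ dKT π π₀ with hWC
  set WI := ∑ π ∈ Is, φ ^ dKT π π₀ with hWI
  have hZsplit : WI + WC = Z :=
    Finset.sum_filter_add_sum_filter_not univ _ _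
  have hprob : mProb φ π₀ (fun π => π.symm w < π.symm u) = WI / Z := by
    rw [mProb]
    simp only [mallowsPMF]
    rw [← hZdef]
    convert_to (∑ π : Equiv.Perm (Fin n),
      (if π.symm w < π.symm u then φ ^ dKT π π₀ / Z else 0)) = WI / Z
    · exact Finset.sum_congr rfl fun π _ => by congr
    calc ∑ π : Equiv.Perm (Fin n), (if π.symm w < π.symm u then φ ^ dKT π π₀ / Z else 0)
        = ∑ π ∈ Is, φ ^ dKT π π₀ / Z := (Finset.sum_filter _ _).symm
      _ = WI / Z := by rw [hWI, Finset.sum_div]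
  have hne : ∀ π : Equiv.Perm (Fin n), π.symm u ≠ π.symm w :=
    fun π e => huw (π.symm.injective e)
  have hCmem : ∀ π ∈ Cs, π.symm u < π.symm w := by
    intro π hπ
    rw [hCs, Finset.mem_filter] at hπ
    exact ((hne π).lt_or_gt).resolve_right hπ.2
  set Φ : Equiv.Perm (Fin n) → Equiv.Perm (Fin n) := fun π => π.trans (Equiv.swap u w) with hΦ
  have hΦu : ∀ π : Equiv.Perm (Fin n), (Φ π).symm u = π.symm w := by
    intro π
    simp only [hΦ]
    rw [Equiv.symm_trans_apply, Equiv.symm_swap, Equiv.swap_apply_left]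
  have hΦw : ∀ π : Equiv.Perm (Fin n), (Φ π).symm w = π.symm u := by
    intro π
    simp only [hΦ]
    rw [Equiv.symm_trans_apply, Equiv.symm_swap, Equiv.swap_apply_right]
  have hΦΦ : ∀ π, Φ (Φ π) = π := by
    intro π
    simp only [hΦ]
    rw [Equiv.trans_assoc, Equiv.swap_swap, Equiv.trans_refl]
  have hWIC : WI = ∑ π ∈ Cs, φ ^ dKT (Φ π) π₀ := by
    rw [hWI]
    refine Finset.sum_bij' (i := fun π _ => Φ π) (j := fun π _ => Φ π) ?_ ?_ ?_ ?_ ?_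
    · intro π hπ
      rw [hIs, Finset.mem_filter] at hπ
      rw [hCs, Finset.mem_filter]
      refine ⟨Finset.mem_univ _, ?_⟩
      rw [hΦu, hΦw]
      exact not_lt_of_gt hπ.2
    · intro π hπ
      rw [hIs, Finset.mem_filter]
      refine ⟨Finset.mem_univ _, ?_⟩
      rw [hΦu, hΦw]
      exact hCmem π hπ
    · intro π _; exact hΦΦ π
    · intro π _; exact hΦΦ π
    · intro π _
      rw [hΦΦ]
  set Bn : Equiv.Perm (Fin n) → ℕ := fun π => (univ.filter (fun j : Fin n =>
      (π₀.symm u < π₀.symm j ∧ π₀.symm j < π₀.symm w) ∧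
      (π.symm u < π.symm j ∧ π.symm j < π.symm w))).card with hBn
  have hkey : ∀ π ∈ Cs, dKT (Φ π) π₀ = dKT π π₀ + (1 + 2 * Bn π) := by
    intro π hπ
    have := dKT_swap π₀ π u w hguw (hCmem π hπ)
    simp only [hΦ, hBn]
    omega
  -- bound on the number of middle elements
  have hcard2 : (univ.filter (fun j : Fin n =>
      π₀.symm u < π₀.symm j ∧ π₀.symm j < π₀.symm w)).card = d - 1 := by
    have hbij : (univ.filter (fun j : Fin n =>
        π₀.symm u < π₀.symm j ∧ π₀.symm j < π₀.symm w)).card = (Finset.Ioo a b).card := by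
      refine Finset.card_bij' (i := fun j _ => π₀.symm j) (j := fun x _ => π₀ x) ?_ ?_ ?_ ?_
      · intro j hj
        rw [Finset.mem_filter, hga, hgb] at hj
        rw [Finset.mem_Ioo]
        exact hj.2
      · intro x hx
        rw [Finset.mem_Ioo] at hx
        rw [Finset.mem_filter, hga, hgb]
        refine ⟨Finset.mem_univ _, ?_⟩
        rw [Equiv.symm_apply_apply]
        exact hx
      · intro j _; exact Equiv.apply_symm_apply π₀ j
      · intro x _; exact Equiv.symm_apply_apply π₀ x
    rw [hbij, Fin.card_Ioo, hd]
  have hBle : ∀ π : Equiv.Perm (Fin n), 1 + 2 * Bn π ≤ 2 * d := by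
    intro π
    have hsub : Bn π ≤ d - 1 := by
      rw [hBn, ← hcard2]
      apply Finset.card_le_card
      intro x hx
      rw [Finset.mem_filter] at hx ⊢
      exact ⟨hx.1, hx.2.1⟩
    omega
  have hWIC2 : WI = ∑ π ∈ Cs, φ ^ dKT π π₀ * φ ^ (1 + 2 * Bn π) := by
    rw [hWIC]
    refine Finset.sum_congr rfl fun π hπ => ?_
    rw [hkey π hπ, pow_add]
  have hdiff : WC - WI = ∑ π ∈ Cs, φ ^ dKT π π₀ * (1 - φ ^ (1 + 2 * Bn π)) := by
    rw [hWC, hWIC2, ← Finset.sum_sub_distrib]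
    exact Finset.sum_congr rfl fun π _ => by ring
  have hWIWC : WI ≤ WC := by
    rw [hWC, hWIC2]
    refine Finset.sum_le_sum fun π _ => ?_
    exact mul_le_of_le_one_right (pow_nonneg hφ0 _) (pow_le_one₀ hφ0 hφ1)
  -- upper bound on the gap
  have hup : WC - WI ≤ 2 * (d : ℝ) * (1 - φ) * Z := by
    have hWCle : WC ≤ Z := by
      have hWInn : 0 ≤ WI := Finset.sum_nonneg fun π _ => pow_nonneg hφ0 _
      linarith [hZsplit]
    have h1 : WC - WI ≤ (1 - φ ^ (2 * d)) * WC := by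
      rw [hdiff]
      calc ∑ π ∈ Cs, φ ^ dKT π π₀ * (1 - φ ^ (1 + 2 * Bn π))
          ≤ ∑ π ∈ Cs, φ ^ dKT π π₀ * (1 - φ ^ (2 * d)) := by
            refine Finset.sum_le_sum fun π _ => ?_
            refine mul_le_mul_of_nonneg_left ?_ (pow_nonneg hφ0 _)
            have := pow_le_pow_of_le_one hφ0 hφ1 (hBle π)
            linarith
        _ = (1 - φ ^ (2 * d)) * WC := by rw [hWC, ← Finset.sum_mul]; ring
    have h2 : (1 : ℝ) - φ ^ (2 * d) ≤ 2 * (d : ℝ) * (1 - φ) := by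
      have := one_sub_pow_le_nat φ hφ0 (2 * d)
      push_cast at this
      linarith
    have hWCnn : 0 ≤ WC := Finset.sum_nonneg fun π _ => pow_nonneg hφ0 _
    have hpownn : (0:ℝ) ≤ 1 - φ ^ (2*d) := by
      have := pow_le_one₀ hφ0 hφ1 (n := 2*d); linarith
    calc WC - WI ≤ (1 - φ ^ (2 * d)) * WC := h1
      _ ≤ (2 * (d : ℝ) * (1 - φ)) * WC := mul_le_mul_of_nonneg_right h2 hWCnn
      _ ≤ (2 * (d : ℝ) * (1 - φ)) * Z := by
          refine mul_le_mul_of_nonneg_left hWCle ?_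
          have : (0:ℝ) ≤ 1 - φ := by linarith
          positivity
      _ = 2 * (d : ℝ) * (1 - φ) * Z := by ring
  -- lower bound on the gap
  have hgap : (1 - φ ^ (2 * d)) * Z / 6 ≤ WC - WI := by
    have hGnn : (0:ℝ) ≤ 1 - φ ^ (2 * d) := by
      have := pow_le_one₀ hφ0 hφ1 (n := 2*d); linarith
    set gf := univ.filter (fun j : Fin n =>
      π₀.symm u < π₀.symm j ∧ π₀.symm j < π₀.symm w) with hgf
    set T := ∑ π ∈ Cs, φ ^ dKT π π₀ * (Bn π : ℝ) with hT
    have hTge : ((d:ℝ) - 1) * (Z / 6) ≤ T := by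
      have hcast : ∀ π : Equiv.Perm (Fin n), ((Bn π : ℕ) : ℝ)
          = ∑ j : Fin n, (if (π₀.symm u < π₀.symm j ∧ π₀.symm j < π₀.symm w) ∧
              (π.symm u < π.symm j ∧ π.symm j < π.symm w) then (1:ℝ) else 0) := by
        intro π
        simp only [hBn]
        rw [Finset.card_filter]
        push_cast
        rfl
      have hTd : T = ∑ j : Fin n, ∑ π ∈ Cs,
          (if (π₀.symm u < π₀.symm j ∧ π₀.symm j < π₀.symm w) ∧
            (π.symm u < π.symm j ∧ π.symm j < π.symm w) then φ ^ dKT π π₀ else 0) := by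
        rw [hT]
        rw [Finset.sum_comm]
        refine Finset.sum_congr rfl fun π _ => ?_
        rw [hcast, Finset.mul_sum]
        refine Finset.sum_congr rfl fun j _ => ?_
        rw [mul_ite, mul_one, mul_zero]
      have hvanish : ∀ j ∈ (univ : Finset (Fin n)), j ∉ gf →
          (∑ π ∈ Cs, (if (π₀.symm u < π₀.symm j ∧ π₀.symm j < π₀.symm w) ∧
            (π.symm u < π.symm j ∧ π.symm j < π.symm w) then φ ^ dKT π π₀ else 0)) = 0 := by
        intro j _ hj
        rw [hgf, Finset.mem_filter] at hj
        refine Finset.sum_eq_zero fun π _ => if_neg ?_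
        rintro ⟨hg, -⟩
        exact hj ⟨Finset.mem_univ _, hg⟩
      have hTd2 : T = ∑ j ∈ gf, ∑ π ∈ Cs,
          (if (π₀.symm u < π₀.symm j ∧ π₀.symm j < π₀.symm w) ∧
            (π.symm u < π.symm j ∧ π.symm j < π.symm w) then φ ^ dKT π π₀ else 0) := by
        rw [hTd]
        exact (Finset.sum_subset (Finset.subset_univ gf) hvanish).symm
      have hinner : ∀ j ∈ gf, Z / 6 ≤ ∑ π ∈ Cs,
          (if (π₀.symm u < π₀.symm j ∧ π₀.symm j < π₀.symm w) ∧
            (π.symm u < π.symm j ∧ π.symm j < π.symm w) then φ ^ dKT π π₀ else 0) := by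
        intro j hj
        rw [hgf, Finset.mem_filter] at hj
        obtain ⟨-, hj1, hj2⟩ := hj
        have htr := triple_ge π₀ φ hφ0 hφ1 u j w hj1 hj2
        rw [← hZdef] at htr
        have hIeq : ∑ π ∈ Cs, (if (π₀.symm u < π₀.symm j ∧ π₀.symm j < π₀.symm w) ∧
              (π.symm u < π.symm j ∧ π.symm j < π.symm w) then φ ^ dKT π π₀ else 0)
            = ∑ π ∈ univ.filter (fun π : Equiv.Perm (Fin n) =>
                π.symm u < π.symm j ∧ π.symm j < π.symm w), φ ^ dKT π π₀ := by
          calc ∑ π ∈ Cs, (if (π₀.symm u < π₀.symm j ∧ π₀.symm j < π₀.symm w) ∧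
                (π.symm u < π.symm j ∧ π.symm j < π.symm w) then φ ^ dKT π π₀ else 0)
              = ∑ π ∈ Cs, (if (π.symm u < π.symm j ∧ π.symm j < π.symm w)
                  then φ ^ dKT π π₀ else 0) := by
                refine Finset.sum_congr rfl fun π _ => ?_
                exact if_congr (and_iff_right ⟨hj1, hj2⟩) rfl rfl
            _ = ∑ π ∈ Cs.filter (fun π : Equiv.Perm (Fin n) =>
                  π.symm u < π.symm j ∧ π.symm j < π.symm w), φ ^ dKT π π₀ :=
                (Finset.sum_filter _ _).symm
            _ = _ := by
                congr 1
                rw [hCs, Finset.filter_filter]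
                refine Finset.filter_congr fun π _ => ?_
                constructor
                · exact And.right
                · intro h
                  exact ⟨not_lt_of_gt (lt_trans h.1 h.2), h⟩
        rw [hIeq]
        linarith [htr]
      have hcardgf : (gf.card : ℝ) = (d:ℝ) - 1 := by
        rw [hgf, hcard2]
        push_cast [Nat.cast_sub hd1]
        ring
      calc ((d:ℝ) - 1) * (Z / 6) = (gf.card : ℝ) * (Z / 6) := by rw [hcardgf]
        _ ≤ ∑ j ∈ gf, ∑ π ∈ Cs,
            (if (π₀.symm u < π₀.symm j ∧ π₀.symm j < π₀.symm w) ∧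
              (π.symm u < π.symm j ∧ π.symm j < π.symm w) then φ ^ dKT π π₀ else 0) := by
            have := Finset.card_nsmul_le_sum gf _ (Z / 6) hinner
            rw [nsmul_eq_mul] at this
            exact this
        _ = T := hTd2.symm
    -- pointwise concavity bound
    have hstep1 : (1 - φ ^ (2 * d)) * (∑ π ∈ Cs, φ ^ dKT π π₀ * (1 + 2 * (Bn π : ℝ)))
        ≤ (2*(d:ℝ)) * (WC - WI) := by
      rw [hdiff, Finset.mul_sum, Finset.mul_sum]
      refine Finset.sum_le_sum fun π _ => ?_
      have hc := conc_pow φ hφ0 hφ1 (hBle π)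
      push_cast at hc
      have hknn : (0:ℝ) ≤ φ ^ dKT π π₀ := pow_nonneg hφ0 _
      nlinarith [mul_le_mul_of_nonneg_left hc hknn]
    have hexp : ∑ π ∈ Cs, φ ^ dKT π π₀ * (1 + 2 * (Bn π : ℝ)) = WC + 2 * T := by
      rw [hWC, hT, Finset.mul_sum, ← Finset.sum_add_distrib]
      refine Finset.sum_congr rfl fun π _ => ?_
      ring
    have hZ2WC : Z ≤ 2 * WC := by linarith [hZsplit, hWIWC]
    have hGWC := mul_le_mul_of_nonneg_left hZ2WC hGnn
    have hGT := mul_le_mul_of_nonneg_left hTge hGnn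
    have hXnn : 0 ≤ (1 - φ ^ (2 * d)) * Z := mul_nonneg hGnn (le_of_lt hZpos)
    have hdc : (1:ℝ) ≤ (d:ℝ) := by exact_mod_cast hd1
    rw [hexp] at hstep1
    have h2dpos : (0:ℝ) < 2*(d:ℝ) := by linarith
    have hfinal : (2*(d:ℝ)) * ((1 - φ ^ (2 * d)) * Z / 6) ≤ (2*(d:ℝ)) * (WC - WI) := by
      nlinarith [hstep1, hGWC, hGT, hXnn]
    exact le_of_mul_le_mul_left hfinal h2dpos
  -- conclude
  constructor
  · rw [hprob, le_div_iff₀ hZpos, ← hDcast]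
    have hq : 0 ≤ (d : ℝ) * (1 - φ) * Z :=
      mul_nonneg (mul_nonneg (Nat.cast_nonneg d) (by linarith)) (le_of_lt hZpos)
    nlinarith [hup, hZsplit, hq]
  · rw [hprob, div_le_iff₀ hZpos, ← hDcast]
    have hminpow := min_le_one_sub_pow φ hφ0 hφ1 d hd1
    have hminnn : (0:ℝ) ≤ min 1 ((d:ℝ) * (1 - φ)) :=
      le_min zero_le_one (mul_nonneg (Nat.cast_nonneg d) (by linarith))
    have hmz := mul_le_mul_of_nonneg_right hminpow (by positivity : (0:ℝ) ≤ Z / 6)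
    have hmzn := mul_nonneg hminnn (le_of_lt hZpos)
    nlinarith [hgap, hZsplit, hmz, hmzn]

end Mallows
end
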